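/- arXiv:math/0609219 — 2 statements merged into one kernel-verified Lean document; each statement's English description precedes it below -/
import Mathlib

section
/- Let G be a topologically 3-connected graph, T a thread of G such that G' = G − (T) is topologically 3-connected, and A a cycle of G containing T. If there exist non-separating cycles P, Q of G with E(P) ∩ E(Q) = E(T), then A + P (symmetric difference of edge sets) lies in the cycle space of G'. -/
open SimpleGraph

universe u v

variable {V : Type u} {W : Type v}

/-- Degree of a vertex, via the cardinality of its neighbor set. -/
noncomputable def ndeg (G : SimpleGraph V) (x : V) : ℕ := (G.neighborSet x).ncard

/-- A graph is 3-connected: at least 4 vertices, and deleting any set of at most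
two vertices leaves a connected graph. -/
def ThreeConnected (G : SimpleGraph V) : Prop :=
  4 ≤ Nat.card V ∧ ∀ s : Set V, s.ncard ≤ 2 → (G.induce sᶜ).Connected

/-- A subgraph is a cycle: connected and every vertex has exactly two neighbours. -/
def IsCycleSub {G : SimpleGraph V} (C : G.Subgraph) : Prop :=
  C.Connected ∧ ∀ v ∈ C.verts, (C.neighborSet v).ncard = 2

/-- Contraction of a set of edges: vertices are the connected components of the
graph spanned by those edges; adjacency is induced from `G`. -/
def contractSG (G : SimpleGraph V) (E' : Set (Sym2 V)) :
    SimpleGraph (SimpleGraph.ConnectedComponent (SimpleGraph.fromEdgeSet E')) where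
  Adj c d := c ≠ d ∧ ∃ a b : V, G.Adj a b ∧
      (SimpleGraph.fromEdgeSet E').connectedComponentMk a = c ∧
      (SimpleGraph.fromEdgeSet E').connectedComponentMk b = d
  symm := ⟨by
    rintro c d ⟨hne, a, b, hab, ha, hb⟩
    exact ⟨hne.symm, b, a, hab.symm, hb, ha⟩⟩
  loopless := ⟨by rintro c ⟨hne, -⟩; exact hne rfl⟩

/-- A candidate block set: nonempty, induces a connected subgraph with no cutvertex. -/
def GoodBlockSet (H : SimpleGraph W) (S : Set W) : Prop :=
  S.Nonempty ∧ (H.induce S).Connected ∧ ∀ v : W, (H.induce (S \ {v})).Preconnected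

/-- A block of a graph, as a vertex set: a maximal `GoodBlockSet`. -/
def IsBlockSet (H : SimpleGraph W) (S : Set W) : Prop :=
  GoodBlockSet H S ∧ ∀ S', S ⊆ S' → GoodBlockSet H S' → S' = S

/-- The number of blocks of a graph. -/
noncomputable def numBlocks (H : SimpleGraph W) : ℕ := {S | IsBlockSet H S}.ncard

/-- The set of circuits (edge sets of cycles) of `G`. -/
def circuits (G : SimpleGraph V) : Set (Set (Sym2 V)) :=
  {X | ∃ C : G.Subgraph, IsCycleSub C ∧ X = C.edgeSet}

/-- The set of non-separating circuits of `G`: edge sets of cycles whose contraction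
does not increase the number of blocks. -/
def nsCircuits (G : SimpleGraph V) : Set (Set (Sym2 V)) :=
  {X | ∃ C : G.Subgraph, IsCycleSub C ∧
      numBlocks (contractSG G C.edgeSet) ≤ numBlocks G ∧ X = C.edgeSet}

/-- The GF(2)-span (closure under symmetric difference) of a family of sets. -/
inductive SDSpan {α : Type u} (S : Set (Set α)) : Set α → Prop
  | empty : SDSpan S ∅
  | step (X Y : Set α) : SDSpan S X → Y ∈ S → SDSpan S (symmDiff X Y)

/-- A thread: a nontrivial path whose internal vertices have degree 2 and whose
end-vertices have degree different from 2. -/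
def IsThread {G : SimpleGraph V} {x y : V} (T : G.Walk x y) : Prop :=
  T.IsPath ∧ 0 < T.length ∧
    (∀ v ∈ T.support, v ≠ x → v ≠ y → ndeg G v = 2) ∧
    ndeg G x ≠ 2 ∧ ndeg G y ≠ 2

/-- The internal vertices of a walk. -/
def threadInternal {G : SimpleGraph V} {x y : V} (T : G.Walk x y) : Set V :=
  {v | v ∈ T.support ∧ v ≠ x ∧ v ≠ y}

/-- `G` is a subdivision of `H`: there is an embedding of the vertices of `H` into
`G` and a system of internally disjoint paths in `G`, one for each edge of `H`,
covering `G` exactly. -/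
def IsSubdivisionOf {V : Type u} {W : Type v} (G : SimpleGraph V) (H : SimpleGraph W) : Prop :=
  ∃ f : W ↪ V, ∃ P : ∀ ⦃a b : W⦄, H.Adj a b → G.Walk (f a) (f b),
    (∀ a b (h : H.Adj a b), (P h).IsPath ∧ 0 < (P h).length) ∧
    (∀ a b (h : H.Adj a b), P h.symm = (P h).reverse) ∧
    (∀ a b (h : H.Adj a b) (v : V), v ∈ (P h).support → v ≠ f a → v ≠ f b →
        v ∉ Set.range f) ∧
    (∀ a b a' b' (h : H.Adj a b) (h' : H.Adj a' b'), s(a, b) ≠ s(a', b') →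
        ∀ v : V, v ∈ (P h).support → v ∈ (P h').support → v ∈ Set.range f) ∧
    (∀ v : V, v ∈ Set.range f ∨ ∃ (a b : W) (h : H.Adj a b), v ∈ (P h).support) ∧
    (∀ e : Sym2 V, e ∈ G.edgeSet ↔ ∃ (a b : W) (h : H.Adj a b), e ∈ (P h).edges)

/-- `G` is topologically 3-connected: a subdivision of some 3-connected graph. -/
def TopThreeConnected {V : Type u} (G : SimpleGraph V) : Prop :=
  ∃ W : Type u, ∃ H : SimpleGraph W, ThreeConnected H ∧ IsSubdivisionOf G H

/-- Restriction of a subgraph of `G` with vertices inside `S` to a subgraph of the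
induced graph `G.induce S`. -/
def restrictSub (G : SimpleGraph V) (S : Set V) (C : G.Subgraph) (hC : C.verts ⊆ S) :
    (G.induce S).Subgraph where
  verts := Subtype.val ⁻¹' C.verts
  Adj a b := C.Adj a b
  adj_sub := fun h => C.adj_sub h
  edge_vert := fun h => C.edge_vert h
  symm := ⟨fun a b h => C.adj_symm h⟩

def nbrsD (D : Set (Sym2 V)) (v : V) : Set V := {w | s(v, w) ∈ D}

lemma nbrsD_symmDiff (X Y : Set (Sym2 V)) (v : V) :
    nbrsD (symmDiff X Y) v = symmDiff (nbrsD X v) (nbrsD Y v) := by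
  ext w
  simp [nbrsD, Set.mem_symmDiff]

lemma even_ncard_symmDiff {α : Type u} {s t : Set α} (hs : s.Finite) (ht : t.Finite)
    (h1 : Even s.ncard) (h2 : Even t.ncard) : Even (symmDiff s t).ncard := by
  have hst : symmDiff s t = (s \ t) ∪ (t \ s) := Set.symmDiff_def s t
  have hd : Disjoint (s \ t) (t \ s) := disjoint_sdiff_sdiff
  have h3 : (symmDiff s t).ncard = (s \ t).ncard + (t \ s).ncard := by
    rw [hst, Set.ncard_union_eq hd hs.diff ht.diff]
  have h4 : (s ∩ t).ncard + (s \ t).ncard = s.ncard :=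
    Set.ncard_inter_add_ncard_diff_eq_ncard s t hs
  have h5 : (t ∩ s).ncard + (t \ s).ncard = t.ncard :=
    Set.ncard_inter_add_ncard_diff_eq_ncard t s ht
  have h6 : (t ∩ s).ncard = (s ∩ t).ncard := by rw [Set.inter_comm]
  rw [h6] at h5
  rw [← h4] at h1
  rw [← h5] at h2
  rw [Nat.even_add] at h1 h2
  rw [h3, Nat.even_add]
  tauto

/-- In a path, edges incident to the first vertex are unique. -/
lemma path_start_nbr_unique {G : SimpleGraph V} {a b : V} (p : G.Walk a b) (hp : p.IsPath)
    {w₁ w₂ : V} (h1 : s(a, w₁) ∈ p.edges) (h2 : s(a, w₂) ∈ p.edges) : w₁ = w₂ := by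
  cases p with
  | nil => simp at h1
  | cons h q =>
    rename_i u
    have key : ∀ w, s(a, w) ∈ (Walk.cons h q).edges → w = u := by
      intro w hw
      rw [Walk.edges_cons, List.mem_cons] at hw
      rcases hw with hw | hw
      · rw [Sym2.eq_iff] at hw
        rcases hw with ⟨-, rfl⟩ | ⟨rfl, rfl⟩
        · rfl
        · exact absurd rfl h.ne
      · exfalso
        have := Walk.fst_mem_support_of_mem_edges q hw
        have hnodup := hp.support_nodup
        rw [Walk.support_cons, List.nodup_cons] at hnodup
        exact hnodup.1 this
    rw [key w₁ h1, key w₂ h2]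

/-- every vertex of a walk other than the start is the second vertex of some edge. -/
lemma walk_edge_at {G : SimpleGraph V} {a b : V} (p : G.Walk a b) {v : V}
    (hv : v ∈ p.support) (hne : v ≠ a) : ∃ w, s(w, v) ∈ p.edges := by
  have htail : v ∈ p.support.tail := by
    rw [p.support_eq_cons, List.mem_cons] at hv
    exact hv.resolve_left hne
  rw [← p.map_snd_darts, List.mem_map] at htail
  obtain ⟨d, hd, hdv⟩ := htail
  refine ⟨d.fst, ?_⟩
  have h2 : d.edge ∈ p.edges := List.mem_map_of_mem hd
  rw [show d.edge = s(d.toProd.1, d.toProd.2) from rfl, hdv] at h2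
  exact h2

/-- In a cycle, every support vertex has exactly two neighbors among the edges. -/
lemma cycle_nbr_two {G : SimpleGraph V} {x : V} {c : G.Walk x x} (hc : c.IsCycle)
    {u : V} (hu : u ∈ c.support) : {w | s(u, w) ∈ c.edges}.ncard = 2 := by
  classical
  have hc' : (c.rotate u hu).IsCycle := hc.rotate hu
  have hset : {w | s(u, w) ∈ c.edges} = {w | s(u, w) ∈ (c.rotate u hu).edges} := by
    ext w; simp [(c.rotate_edges u hu).mem_iff]
  rw [hset]
  generalize c.rotate u hu = c' at hc' ⊢
  clear hset hc hu c
  cases c' with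
  | nil => exact absurd rfl hc'.ne_nil
  | cons h q =>
    rename_i v₀
    rw [Walk.cons_isCycle_iff] at hc'
    obtain ⟨hq, hne⟩ := hc'
    have huv : u ≠ v₀ := h.ne
    obtain ⟨z, hz, q'', hq''⟩ := Walk.exists_eq_cons_of_ne huv q.reverse
    have hqrev : q.reverse.IsPath := hq.reverse
    have hzq : s(u, z) ∈ q.edges := by
      have : s(u, z) ∈ q.reverse.edges := by rw [hq'']; simp
      rwa [Walk.edges_reverse, List.mem_reverse] at this
    have hzv : z ≠ v₀ := by
      rintro rfl
      exact hne hzq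
    have hset2 : {w | s(u, w) ∈ (Walk.cons h q).edges} = {v₀, z} := by
      ext w
      simp only [Walk.edges_cons, List.mem_cons, Set.mem_setOf_eq, Set.mem_insert_iff,
        Set.mem_singleton_iff]
      constructor
      · rintro (hw | hw)
        · rw [Sym2.eq_iff] at hw
          rcases hw with ⟨-, rfl⟩ | ⟨rfl, rfl⟩
          · left; rfl
          · exact absurd rfl h.ne
        · right
          have hw' : s(u, w) ∈ q.reverse.edges := by
            rw [Walk.edges_reverse, List.mem_reverse]; exact hw
          have hz' : s(u, z) ∈ q.reverse.edges := by rw [hq'']; simp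
          exact path_start_nbr_unique q.reverse hqrev hw' hz'
      · rintro (rfl | rfl)
        · left; rfl
        · right; exact hzq
    rw [hset2, Set.ncard_pair (Ne.symm hzv)]

/-- From a cycle walk, a cycle subgraph. -/
lemma toSubgraph_isCycleSub {G : SimpleGraph V} {x : V} {c : G.Walk x x} (hc : c.IsCycle) :
    IsCycleSub c.toSubgraph := by
  constructor
  · exact c.toSubgraph_connected
  · intro v hv
    rw [Walk.mem_verts_toSubgraph] at hv
    have hns : c.toSubgraph.neighborSet v = {w | s(v, w) ∈ c.edges} := by
      ext w
      simp only [Subgraph.mem_neighborSet, Set.mem_setOf_eq, ← Subgraph.mem_edgeSet,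
        Walk.edgeSet_toSubgraph, Walk.mem_edgeSet, Set.mem_setOf_eq]
    rw [hns]
    exact cycle_nbr_two hc hv

/-- Extraction of a cycle from a nonempty edge set all of whose incident vertices
have at least two neighbors. -/
lemma exists_cycle_sub [Finite V] (G : SimpleGraph V) (D : Set (Sym2 V))
    (hDG : D ⊆ G.edgeSet) (hne : D.Nonempty)
    (hdeg : ∀ v w, s(v, w) ∈ D → 2 ≤ (nbrsD D v).ncard) :
    ∃ C : G.Subgraph, IsCycleSub C ∧ C.edgeSet ⊆ D ∧ C.edgeSet.Nonempty := by
  classical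
  cases nonempty_fintype V
  set GD : SimpleGraph V := fromEdgeSet D with hGD
  have hadjD : ∀ a b : V, GD.Adj a b ↔ s(a, b) ∈ D := by
    intro a b
    rw [hGD, fromEdgeSet_adj]
    constructor
    · exact fun h => h.1
    · intro h
      exact ⟨h, (G.ne_of_adj ((G.mem_edgeSet).mp (hDG h)))⟩
  -- the set of path lengths
  set L : Set ℕ := {n | ∃ (a : V) (b : V) (p : GD.Walk a b), p.IsPath ∧ p.length = n} with hL
  have hL1 : 1 ∈ L := by
    obtain ⟨e, he⟩ := hne
    induction e with
    | h a b =>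
      have hab : GD.Adj a b := (hadjD a b).mpr he
      exact ⟨a, b, Walk.cons hab Walk.nil, by simp [Walk.isPath_def, hab.ne], rfl⟩
  have hLbdd : BddAbove L := by
    refine ⟨Fintype.card V, ?_⟩
    rintro n ⟨a, b, p, hp, rfl⟩
    exact le_of_lt hp.length_lt
  have hmax : sSup L ∈ L := Nat.sSup_mem ⟨1, hL1⟩ hLbdd
  obtain ⟨a, b, p, hp, hplen⟩ := hmax
  have hS1 : 1 ≤ sSup L := le_csSup hLbdd hL1
  -- work with the reverse walk q : Walk b a
  have hq : p.reverse.IsPath := hp.reverse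
  have hqlen : p.reverse.length = sSup L := by rw [Walk.length_reverse, hplen]
  revert hq hqlen
  generalize p.reverse = q
  clear hplen hp p
  intro hq hqlen
  cases q with
  | nil => rw [← hqlen] at hS1; simp at hS1
  | cons h₁ q₁ =>
    rename_i w
    have hyw : s(b, w) ∈ D := (hadjD b w).mp h₁
    -- find z ≠ w adjacent to b
    have hzex : ∃ z, s(b, z) ∈ D ∧ z ≠ w := by
      by_contra hcon
      push_neg at hcon
      have hsub : nbrsD D b ⊆ {w} := by
        intro z hz
        exact hcon z hz
      have := Set.ncard_le_ncard hsub (Set.finite_singleton w)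
      rw [Set.ncard_singleton] at this
      have h2 := hdeg b w hyw
      omega
    obtain ⟨z, hz, hzw⟩ := hzex
    have hzb : GD.Adj b z := (hadjD b z).mpr hz
    by_cases hzsup : z ∈ (Walk.cons h₁ q₁).support
    · -- close a cycle
      set t := (Walk.cons h₁ q₁).takeUntil z hzsup with ht
      have htpath : t.IsPath := hq.takeUntil hzsup
      have hcyc : (Walk.cons hzb.symm t).IsCycle := by
        rw [Walk.cons_isCycle_iff]
        refine ⟨htpath, ?_⟩
        intro hmem
        have hmem' : s(z, b) ∈ (Walk.cons h₁ q₁).edges :=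
          Walk.edges_takeUntil_subset _ hzsup hmem
        rw [Walk.edges_cons, List.mem_cons] at hmem'
        rcases hmem' with hmem' | hmem'
        · rw [Sym2.eq_iff] at hmem'
          rcases hmem' with ⟨rfl, -⟩ | ⟨hzw', -⟩
          · exact hzb.ne rfl
          · exact hzw hzw'
        · have : b ∈ q₁.support := Walk.snd_mem_support_of_mem_edges q₁ hmem'
          have hnodup := hq.support_nodup
          rw [Walk.support_cons, List.nodup_cons] at hnodup
          exact hnodup.1 this
      -- transfer the cycle to G
      have hedgesD : ∀ e ∈ (Walk.cons hzb.symm t).edges, e ∈ D := by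
        intro e he
        have : e ∈ GD.edgeSet := Walk.edges_subset_edgeSet _ he
        rw [hGD, edgeSet_fromEdgeSet] at this
        exact this.1
      have hedges : ∀ e ∈ (Walk.cons hzb.symm t).edges, e ∈ G.edgeSet :=
        fun e he => hDG (hedgesD e he)
      set c := (Walk.cons hzb.symm t).transfer G hedges with hc
      have hccyc : c.IsCycle := hcyc.transfer hedges
      refine ⟨c.toSubgraph, toSubgraph_isCycleSub hccyc, ?_, ?_⟩
      · intro e he
        rw [Walk.edgeSet_toSubgraph] at he
        rw [hc, Walk.mem_edgeSet, Walk.edges_transfer] at he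
        exact hedgesD e he
      · refine ⟨s(z, b), ?_⟩
        rw [Walk.edgeSet_toSubgraph, hc, Walk.mem_edgeSet, Walk.edges_transfer]
        simp
    · -- extend the path: contradiction with maximality
      exfalso
      have hext : (Walk.cons hzb.symm (Walk.cons h₁ q₁)).IsPath := hq.cons hzsup
      have : (Walk.cons hzb.symm (Walk.cons h₁ q₁)).length ∈ L :=
        ⟨z, a, _, hext, rfl⟩
      have hle := le_csSup hLbdd this
      rw [Walk.length_cons] at hle
      rw [hqlen] at hle
      omega

lemma nbrsD_edgeSet {G : SimpleGraph V} (C : G.Subgraph) (v : V) :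
    nbrsD C.edgeSet v = C.neighborSet v := by
  ext w
  simp [nbrsD, Subgraph.mem_neighborSet, Subgraph.mem_edgeSet]

lemma even_nbrs_cycle {G : SimpleGraph V} {C : G.Subgraph} (hC : IsCycleSub C) (v : V) :
    Even (nbrsD C.edgeSet v).ncard := by
  rw [nbrsD_edgeSet]
  by_cases hv : v ∈ C.verts
  · rw [hC.2 v hv]; exact even_two
  · have : C.neighborSet v = ∅ := by
      ext w
      simp only [Subgraph.mem_neighborSet, Set.mem_empty_iff_false, iff_false]
      exact fun h => hv (C.edge_vert h)
    rw [this]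
    simp

lemma sdspan_of_even [Finite V] (G : SimpleGraph V) (S : Set (Set (Sym2 V))) (I : Set V)
    (hS : ∀ C : G.Subgraph, IsCycleSub C → Disjoint C.verts I → C.edgeSet ∈ S) :
    ∀ (n : ℕ) (D : Set (Sym2 V)), D.ncard ≤ n → D ⊆ G.edgeSet →
      (∀ v, Even (nbrsD D v).ncard) → (∀ v ∈ I, nbrsD D v = ∅) → SDSpan S D := by
  intro n
  induction n with
  | zero =>
    intro D hcard _ _ _
    have : D = ∅ := by
      have hfin : D.Finite := Set.toFinite D
      rw [← Set.ncard_eq_zero hfin]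
      omega
    rw [this]
    exact SDSpan.empty
  | succ n ih =>
    intro D hcard hDG heven hI
    by_cases hDe : D = ∅
    · rw [hDe]; exact SDSpan.empty
    have hne : D.Nonempty := Set.nonempty_iff_ne_empty.mpr hDe
    have hdeg : ∀ v w, s(v, w) ∈ D → 2 ≤ (nbrsD D v).ncard := by
      intro v w hvw
      have h1 : 1 ≤ (nbrsD D v).ncard := by
        rw [Nat.one_le_iff_ne_zero, ← Nat.pos_iff_ne_zero, Set.ncard_pos (Set.toFinite _)]
        exact ⟨w, hvw⟩
      obtain ⟨k, hk⟩ := heven v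
      omega
    obtain ⟨C, hC, hCD, hCne⟩ := exists_cycle_sub G D hDG hne hdeg
    have hCvert : ∀ v ∈ C.verts, ∃ w, s(v, w) ∈ C.edgeSet := by
      intro v hv
      have h2 := hC.2 v hv
      have : (C.neighborSet v).Nonempty := by
        rw [← Set.ncard_pos (Set.toFinite _)]
        omega
      obtain ⟨w, hw⟩ := this
      exact ⟨w, Subgraph.mem_edgeSet.mpr hw⟩
    have hdisj : Disjoint C.verts I := by
      rw [Set.disjoint_left]
      intro v hv hvI
      obtain ⟨w, hw⟩ := hCvert v hv
      have : w ∈ nbrsD D v := hCD hw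
      rw [hI v hvI] at this
      exact this
    set D' := symmDiff D C.edgeSet with hD'
    have hD'eq : D' = D \ C.edgeSet := symmDiff_of_ge hCD
    have hssub : D' ⊂ D := by
      rw [hD'eq]
      constructor
      · exact Set.diff_subset
      · intro hsub
        obtain ⟨e, he⟩ := hCne
        have : e ∈ D \ C.edgeSet := hsub (hCD he)
        exact this.2 he
    have hcard' : D'.ncard ≤ n := by
      have := Set.ncard_lt_ncard hssub (Set.toFinite D)
      omega
    have hspan : SDSpan S D' := by
      refine ih D' hcard' (fun e he => hDG (hssub.1 $ he)) ?_ ?_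
      · intro v
        rw [hD', nbrsD_symmDiff]
        exact even_ncard_symmDiff (Set.toFinite _) (Set.toFinite _) (heven v)
          (even_nbrs_cycle hC v)
      · intro v hv
        have hsub2 : nbrsD D' v ⊆ nbrsD D v := by
          intro w hw
          exact hssub.1 hw
        rw [hI v hv] at hsub2
        exact Set.subset_empty_iff.mp hsub2
    have hstep := SDSpan.step D' C.edgeSet hspan (hS C hC hdisj)
    rwa [hD', symmDiff_symmDiff_cancel_right] at hstep

/-- If `A` is a cycle of `G` containing the thread `T` and `P`, `Q` are
non-separating cycles of `G` meeting exactly in `T`, then `A + P` lies in the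
cycle space of `G − (T)`. -/
theorem stmt11 {V : Type} [Fintype V] (G : SimpleGraph V) (hG : TopThreeConnected G)
    {x y : V} (T : G.Walk x y) (hT : IsThread T)
    (hG' : TopThreeConnected (G.induce (threadInternal T)ᶜ))
    (A P Q : G.Subgraph) (hA : IsCycleSub A) (hTA : T.toSubgraph ≤ A)
    (hP : IsCycleSub P) (hQ : IsCycleSub Q)
    (hPns : numBlocks (contractSG G P.edgeSet) ≤ numBlocks G)
    (hQns : numBlocks (contractSG G Q.edgeSet) ≤ numBlocks G)
    (hPQ : P.edgeSet ∩ Q.edgeSet = T.toSubgraph.edgeSet) :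
    SDSpan {X : Set (Sym2 V) | ∃ C : G.Subgraph, IsCycleSub C ∧
        Disjoint C.verts (threadInternal T) ∧ X = C.edgeSet}
      (symmDiff A.edgeSet P.edgeSet) := by
  classical
  obtain ⟨hTpath, hTlen, hTint, hTx, hTy⟩ := hT
  set D₀ := symmDiff A.edgeSet P.edgeSet with hD₀
  refine sdspan_of_even G {X : Set (Sym2 V) | ∃ C : G.Subgraph, IsCycleSub C ∧
      Disjoint C.verts (threadInternal T) ∧ X = C.edgeSet} (threadInternal T)
    (fun C hC hd => ⟨C, hC, hd, rfl⟩) D₀.ncard D₀ le_rfl ?_ ?_ ?_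
  · intro e he
    rcases Set.mem_symmDiff.mp he with ⟨h1, -⟩ | ⟨h1, -⟩
    · exact A.edgeSet_subset h1
    · exact P.edgeSet_subset h1
  · intro v
    rw [hD₀, nbrsD_symmDiff]
    exact even_ncard_symmDiff (Set.toFinite _) (Set.toFinite _)
      (even_nbrs_cycle hA v) (even_nbrs_cycle hP v)
  · intro v hv
    obtain ⟨hvs, hvx, hvy⟩ := hv
    have hdeg2 : (G.neighborSet v).ncard = 2 := hTint v hvs hvx hvy
    obtain ⟨w, hw⟩ := walk_edge_at T hvs hvx
    have hwT : s(w, v) ∈ T.toSubgraph.edgeSet := by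
      rw [Walk.edgeSet_toSubgraph]
      exact hw
    have hwP : s(w, v) ∈ P.edgeSet := by
      rw [← hPQ] at hwT
      exact hwT.1
    have hwA : s(w, v) ∈ A.edgeSet := Subgraph.edgeSet_mono hTA hwT
    have key : ∀ C : G.Subgraph, IsCycleSub C → s(w, v) ∈ C.edgeSet →
        nbrsD C.edgeSet v = G.neighborSet v := by
      intro C hC hwC
      have hvC : v ∈ C.verts := C.edge_vert (Subgraph.mem_edgeSet.mp hwC).symm
      rw [nbrsD_edgeSet]
      refine Set.eq_of_subset_of_ncard_le (C.neighborSet_subset v) ?_ (Set.toFinite _)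
      rw [hdeg2, hC.2 v hvC]
    rw [hD₀, nbrsD_symmDiff, key A hA hwA, key P hP hwP, symmDiff_self,
      Set.bot_eq_empty]
end

section
/- If G is a subdivision of a 3-connected graph, then G has no two parallel threads, i.e., there do not exist two distinct threads of G with the same pair of end-vertices. -/
open SimpleGraph

universe u v

variable {V : Type u} {W : Type v}

/-- A path between the same endpoints whose edges are contained in another path's
edges must equal that path. -/
lemma my_path_eq_of_edges_subset {V : Type u} {G : SimpleGraph V} :
    ∀ {x y : V} (p q : G.Walk x y), p.IsPath → q.IsPath →
      (∀ e ∈ p.edges, e ∈ q.edges) → p = q := by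
  intro x y p
  induction p with
  | nil =>
    intro q _ hq _
    cases q with
    | nil => rfl
    | cons h r =>
      exfalso
      rw [Walk.cons_isPath_iff] at hq
      exact hq.2 r.end_mem_support
  | @cons x c y h p' ih =>
    intro q hp hq hsub
    have hxc : s(x, c) ∈ q.edges := hsub _ (by simp [Walk.edges_cons])
    cases q with
    | nil => simp at hxc
    | cons h' q' =>
      rename_i d
      rw [Walk.edges_cons, List.mem_cons] at hxc
      have hcd : c = d := by
        rcases hxc with heq | hmem
        · rcases Sym2.eq_iff.mp heq with ⟨-, rfl⟩ | ⟨rfl, rfl⟩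
          · rfl
          · exact absurd rfl h.ne
        · exfalso
          rw [Walk.cons_isPath_iff] at hq
          exact hq.2 (q'.fst_mem_support_of_mem_edges hmem)
      subst hcd
      have hp' := (Walk.cons_isPath_iff h p').mp hp
      have hq' := (Walk.cons_isPath_iff h' q').mp hq
      have hsub' : ∀ e ∈ p'.edges, e ∈ q'.edges := by
        intro e he
        have := hsub e (by simp [Walk.edges_cons, he])
        rw [Walk.edges_cons, List.mem_cons] at this
        rcases this with heq | hmem
        · exfalso
          subst heq
          exact hp'.2 (p'.fst_mem_support_of_mem_edges he)
        · exact hmem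
      have := ih q' hp'.1 hq'.1 hsub'
      subst this
      rfl


lemma my_head_edges {V : Type u} {G : SimpleGraph V} {c b : V} (q : G.Walk c b)
    (hq : q.IsPath) (hne : c ≠ b) : ∃ d, d ∈ q.support ∧ {t | s(c, t) ∈ q.edges} = {d} := by
  cases q with
  | nil => exact absurd rfl hne
  | cons h q' =>
    rename_i d
    refine ⟨d, by simp, ?_⟩
    ext t
    simp only [Set.mem_setOf_eq, Walk.edges_cons, List.mem_cons, Set.mem_singleton_iff]
    constructor
    · rintro (heq | hmem)
      · rcases Sym2.eq_iff.mp heq with ⟨-, rfl⟩ | ⟨rfl, rfl⟩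
        · rfl
        · exact absurd rfl h.ne
      · exfalso
        rw [Walk.cons_isPath_iff] at hq
        exact hq.2 (q'.fst_mem_support_of_mem_edges hmem)
    · rintro rfl
      exact Or.inl rfl

lemma my_internal_nbrs {V : Type u} {G : SimpleGraph V} :
    ∀ {a b : V} (p : G.Walk a b), p.IsPath → ∀ v ∈ p.support, v ≠ a → v ≠ b →
      ∃ u w : V, u ≠ w ∧ {t | s(v, t) ∈ p.edges} = {u, w} := by
  intro a b p
  induction p with
  | nil => intro _ v hv hva _; simp at hv; exact absurd hv hva
  | @cons a c b h q ih =>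
    intro hp v hv hva hvb
    rw [Walk.support_cons, List.mem_cons] at hv
    rcases hv with rfl | hv
    · exact absurd rfl hva
    by_cases hvc : v = c
    · subst hvc
      obtain ⟨d, hd, hset⟩ := my_head_edges q ((Walk.cons_isPath_iff h q).mp hp).1 hvb
      refine ⟨a, d, ?_, ?_⟩
      · intro had; subst had
        exact ((Walk.cons_isPath_iff h q).mp hp).2 hd
      · ext t
        simp only [Set.mem_setOf_eq, Walk.edges_cons, List.mem_cons, Set.mem_insert_iff,
          Set.mem_singleton_iff]
        constructor
        · rintro (heq | hmem)
          · rcases Sym2.eq_iff.mp heq with ⟨hca, -⟩ | ⟨-, rfl⟩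
            · exact absurd hca.symm h.ne
            · exact Or.inl rfl
          · right
            have : t ∈ {t | s(v, t) ∈ q.edges} := hmem
            rw [hset] at this
            exact this
        · rintro (rfl | htd)
          · exact Or.inl (Sym2.eq_swap)
          · right
            have : t ∈ {t | s(v, t) ∈ q.edges} := by rw [hset]; exact htd
            exact this
    · obtain ⟨u, w, huw, hset⟩ := ih ((Walk.cons_isPath_iff h q).mp hp).1 v hv hvc hvb
      refine ⟨u, w, huw, ?_⟩
      rw [← hset]
      ext t
      simp only [Set.mem_setOf_eq, Walk.edges_cons, List.mem_cons]
      constructor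
      · rintro (heq | hmem)
        · exfalso
          rcases Sym2.eq_iff.mp heq with ⟨hva', -⟩ | ⟨hvc', -⟩
          · exact hva hva'
          · exact hvc hvc'
        · exact hmem
      · exact Or.inr

lemma my_loop_length {V : Type u} {G : SimpleGraph V} {x : V} (p : G.Walk x x)
    (hp : p.IsPath) : p.length = 0 := by
  cases p with
  | nil => rfl
  | cons h q =>
    exfalso
    rw [Walk.cons_isPath_iff] at hp
    exact hp.2 q.end_mem_support

lemma my_exists_last_edge {V : Type u} {G : SimpleGraph V} :
    ∀ {x y : V} (p : G.Walk x y), x ≠ y → ∃ u, s(u, y) ∈ p.edges := by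
  intro x y p
  induction p with
  | nil => intro h; exact absurd rfl h
  | @cons x c y h q ih =>
    intro _
    by_cases hcy : c = y
    · subst hcy
      exact ⟨x, by simp⟩
    · obtain ⟨u, hu⟩ := ih hcy
      exact ⟨u, by simp [Walk.edges_cons, hu]⟩


lemma my_thread_in_path {V : Type u} {W : Type v} {G : SimpleGraph V} {H : SimpleGraph W}
    (f : W ↪ V) (P : ∀ ⦃a b : W⦄, H.Adj a b → G.Walk (f a) (f b))
    (hRev : ∀ a b (h : H.Adj a b), P h.symm = (P h).reverse)
    (hDisj : ∀ a b a' b' (h : H.Adj a b) (h' : H.Adj a' b'), s(a, b) ≠ s(a', b') →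
        ∀ v : V, v ∈ (P h).support → v ∈ (P h').support → v ∈ Set.range f)
    (hEdge : ∀ e : Sym2 V, e ∈ G.edgeSet ↔ ∃ (a b : W) (h : H.Adj a b), e ∈ (P h).edges) :
    ∀ {c y : V} (T : G.Walk c y) {z : V} (hzc : G.Adj z c),
      (Walk.cons hzc T).IsPath →
      (∀ v ∈ (Walk.cons hzc T).support, v ≠ z → v ≠ y → v ∉ Set.range f) →
      ∀ {a b : W} (h : H.Adj a b), s(z, c) ∈ (P h).edges →
      ∀ e ∈ (Walk.cons hzc T).edges, e ∈ (P h).edges := by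
  have hsame : ∀ {a b a' b' : W} (h : H.Adj a b) (h' : H.Adj a' b'), s(a, b) = s(a', b') →
      ∀ e ∈ (P h').edges, e ∈ (P h).edges := by
    intro a b a' b' h h' hss e he
    rcases Sym2.eq_iff.mp hss with ⟨rfl, rfl⟩ | ⟨rfl, rfl⟩
    · rwa [Subsingleton.elim h' h] at he
    · rw [Subsingleton.elim h' h.symm, hRev] at he
      rw [Walk.edges_reverse, List.mem_reverse] at he
      exact he
  intro c y T
  induction T with
  | nil =>
    intro z hzc hp hint a b h hfirst e he
    simp only [Walk.edges_cons, Walk.edges_nil, List.mem_cons, List.not_mem_nil, or_false] at he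
    subst he
    exact hfirst
  | @cons c d y hcd T'' ih =>
    intro z hzc hp hint a b h hfirst e he
    have hp1 := (Walk.cons_isPath_iff _ _).mp hp
    have hp2 := (Walk.cons_isPath_iff _ _).mp hp1.1
    have hcz : c ≠ z := hzc.ne'
    have hcy : c ≠ y := fun hc => hp2.2 (hc ▸ T''.end_mem_support)
    have hcf : c ∉ Set.range f := hint c (by simp) hcz hcy
    obtain ⟨a', b', h', hmem'⟩ := (hEdge s(c, d)).mp ((G.mem_edgeSet).mpr hcd)
    have hcsup : c ∈ (P h).support := (P h).snd_mem_support_of_mem_edges hfirst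
    have hcsup' : c ∈ (P h').support := (P h').fst_mem_support_of_mem_edges hmem'
    by_cases hss : s(a, b) = s(a', b')
    · have hsecond : s(c, d) ∈ (P h).edges := hsame h h' hss _ hmem'
      have hint' : ∀ v ∈ (Walk.cons hcd T'').support, v ≠ c → v ≠ y → v ∉ Set.range f := by
        intro v hv hvc hvy
        have hvz : v ≠ z := fun hz => hp1.2 (hz ▸ hv)
        exact hint v (by rw [Walk.support_cons]; exact List.mem_cons_of_mem _ hv) hvz hvy
      have hrec := ih hcd hp1.1 hint' h hsecond
      rw [Walk.edges_cons, List.mem_cons] at he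
      rcases he with rfl | he
      · exact hfirst
      · exact hrec e he
    · exact absurd (hDisj a b a' b' h h' hss c hcsup hcsup') hcf

lemma my_minDegree {W : Type v} (H : SimpleGraph W) (hH : ThreeConnected H) (a : W) :
    3 ≤ ndeg H a := by
  obtain ⟨hcard, hconn⟩ := hH
  have hfin : Finite W := (Nat.card_pos_iff.mp (by omega)).2
  by_contra hlt
  push_neg at hlt
  have hle : (H.neighborSet a).ncard ≤ 2 := by
    unfold ndeg at hlt; omega
  have hC := hconn _ hle
  have ha : a ∈ (H.neighborSet a)ᶜ := by simp
  have hsum := Set.ncard_add_ncard_compl (H.neighborSet a)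
  have hcard' : 2 ≤ ((H.neighborSet a)ᶜ).ncard := by omega
  obtain ⟨b, hb, hba⟩ := Set.exists_ne_of_one_lt_ncard (s := (H.neighborSet a)ᶜ) (by omega) a
  have hrch := hC.preconnected ⟨a, ha⟩ ⟨b, hb⟩
  obtain ⟨p⟩ := hrch
  have hnn : ¬ p.Nil := Walk.not_nil_of_ne (by simp [Subtype.ext_iff]; exact fun h => hba h.symm)
  have hadj := Walk.adj_snd hnn
  have : H.Adj a ↑(p.getVert 1) := hadj
  have := (p.getVert 1).2
  simp only [Set.mem_compl_iff, mem_neighborSet] at this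
  exact this ‹H.Adj a ↑(p.getVert 1)›

/-- A topologically 3-connected graph has no two parallel threads. -/
theorem stmt14 {V : Type} [Fintype V] (G : SimpleGraph V)
    (hG : TopThreeConnected G) :
    ¬ ∃ (x y : V) (T₁ T₂ : G.Walk x y), IsThread T₁ ∧ IsThread T₂ ∧
      {e | e ∈ T₁.edges} ≠ {e | e ∈ T₂.edges} := by
  classical
  rintro ⟨x, y, T₁, T₂, hT₁, hT₂, hnee⟩
  obtain ⟨W, H, hH3, f, P, hPath, hRev, hInt, hDisj, hCover, hEdge⟩ := hG
  have hsame : ∀ {a b a' b' : W} (h : H.Adj a b) (h' : H.Adj a' b'), s(a, b) = s(a', b') →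
      ∀ e ∈ (P h').edges, e ∈ (P h).edges := by
    intro a b a' b' h h' hss e he
    rcases Sym2.eq_iff.mp hss with ⟨rfl, rfl⟩ | ⟨rfl, rfl⟩
    · rwa [Subsingleton.elim h' h] at he
    · rw [Subsingleton.elim h' h.symm, hRev] at he
      rw [Walk.edges_reverse, List.mem_reverse] at he
      exact he
  have hdeg3 : ∀ a : W, 3 ≤ ndeg H a := my_minDegree H hH3
  have hbig : ∀ a : W, 3 ≤ ndeg G (f a) := by
    intro a
    refine le_trans (hdeg3 a) ?_
    have hfa : ∀ b (hb : H.Adj a b), G.Adj (f a) ((P hb).getVert 1) := by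
      intro b hb
      have hlen : 0 < (P hb).length := (hPath a b hb).2
      have := (P hb).adj_getVert_succ (i := 0) hlen
      rwa [Walk.getVert_zero] at this
    show (H.neighborSet a).ncard ≤ (G.neighborSet (f a)).ncard
    apply Set.ncard_le_ncard_of_injOn (fun b => if hb : H.Adj a b then (P hb).getVert 1 else f a)
    · intro b hb
      rw [mem_neighborSet] at hb
      simp only [dif_pos hb]
      exact hfa b hb
    · intro b₁ hb₁ b₂ hb₂ heq
      rw [mem_neighborSet] at hb₁ hb₂
      by_contra hbne
      simp only [dif_pos hb₁, dif_pos hb₂] at heq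
      have hss : s(a, b₁) ≠ s(a, b₂) := by
        intro hcon
        rcases Sym2.eq_iff.mp hcon with ⟨-, h12⟩ | ⟨hab, -⟩
        · exact hbne h12
        · exact hb₂.ne hab
      have hv1 : (P hb₁).getVert 1 ∈ (P hb₁).support := by
        rw [Walk.mem_support_iff_exists_getVert]
        exact ⟨1, rfl, by have := (hPath a b₁ hb₁).2; omega⟩
      have hv2 : (P hb₁).getVert 1 ∈ (P hb₂).support := by
        rw [Walk.mem_support_iff_exists_getVert]
        exact ⟨1, heq.symm, by have := (hPath a b₂ hb₂).2; omega⟩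
      have hvr : (P hb₁).getVert 1 ∈ Set.range f :=
        hDisj a b₁ a b₂ hb₁ hb₂ hss _ hv1 hv2
      have hvfa : (P hb₁).getVert 1 ≠ f a := by
        intro hcon
        have := hfa b₁ hb₁
        rw [hcon] at this
        exact G.loopless.irrefl _ this
      have h1 : (P hb₁).getVert 1 = f b₁ := by
        by_contra hc
        exact (hInt a b₁ hb₁ _ hv1 hvfa hc) hvr
      have h2 : (P hb₁).getVert 1 = f b₂ := by
        by_contra hc
        exact (hInt a b₂ hb₂ _ hv2 hvfa hc) hvr
      exact hbne (f.injective (h1.symm.trans h2))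
  have hnotrange : ∀ v : V, ndeg G v = 2 → v ∉ Set.range f := by
    rintro v hv ⟨a, rfl⟩
    have := hbig a
    omega
  have hend : ∀ {a b : W} (h : H.Adj a b) (v : V), v ∈ (P h).support → ndeg G v ≠ 2 →
      v = f a ∨ v = f b := by
    intro a b h v hvs hvdeg
    by_contra hcon
    push_neg at hcon
    obtain ⟨hva, hvb⟩ := hcon
    have hvr : v ∉ Set.range f := hInt a b h v hvs hva hvb
    have hNset : G.neighborSet v = {t | s(v, t) ∈ (P h).edges} := by
      ext t
      simp only [mem_neighborSet, Set.mem_setOf_eq]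
      constructor
      · intro hadj
        obtain ⟨a', b', h', hmem'⟩ := (hEdge s(v, t)).mp ((G.mem_edgeSet).mpr hadj)
        by_cases hss : s(a, b) = s(a', b')
        · exact hsame h h' hss _ hmem'
        · exact absurd
            (hDisj a b a' b' h h' hss v hvs ((P h').fst_mem_support_of_mem_edges hmem')) hvr
      · intro hmem
        exact (G.mem_edgeSet).mp (Walk.edges_subset_edgeSet _ hmem)
    obtain ⟨u, w, huw, hset⟩ := my_internal_nbrs (P h) (hPath a b h).1 v hvs hva hvb
    apply hvdeg
    show (G.neighborSet v).ncard = 2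
    rw [hNset, hset]
    exact Set.ncard_pair huw
  have hxy : x ≠ y := by
    rintro rfl
    have h0 := my_loop_length T₁ hT₁.1
    have h1 := hT₁.2.1
    omega
  have key : ∀ T : G.Walk x y, IsThread T →
      ∃ (a b : W) (h : H.Adj a b),
        ((x = f a ∧ y = f b) ∨ (x = f b ∧ y = f a)) ∧
        ∀ e, e ∈ T.edges ↔ e ∈ (P h).edges := by
    intro T hT
    obtain ⟨hTpath, hTlen, hTint, hTx, hTy⟩ := hT
    have hint : ∀ v ∈ T.support, v ≠ x → v ≠ y → v ∉ Set.range f := fun v hv hvx hvy =>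
      hnotrange v (hTint v hv hvx hvy)
    cases T with
    | nil => exact absurd rfl hxy
    | @cons _ c _ hzc T' =>
      obtain ⟨a, b, h, hfirst⟩ := (hEdge s(x, c)).mp ((G.mem_edgeSet).mpr hzc)
      have hall : ∀ e ∈ (Walk.cons hzc T').edges, e ∈ (P h).edges :=
        my_thread_in_path f P hRev hDisj hEdge T' hzc hTpath hint h hfirst
      have hxsup : x ∈ (P h).support := (P h).fst_mem_support_of_mem_edges hfirst
      obtain ⟨u, hu⟩ := my_exists_last_edge (Walk.cons hzc T') hxy
      have hysup : y ∈ (P h).support := (P h).snd_mem_support_of_mem_edges (hall _ hu)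
      have hx' := hend h x hxsup hTx
      have hy' := hend h y hysup hTy
      have hor : (x = f a ∧ y = f b) ∨ (x = f b ∧ y = f a) := by
        rcases hx' with hx | hx <;> rcases hy' with hy | hy
        · exact absurd (hx.trans hy.symm) hxy
        · exact Or.inl ⟨hx, hy⟩
        · exact Or.inr ⟨hx, hy⟩
        · exact absurd (hx.trans hy.symm) hxy
      refine ⟨a, b, h, hor, ?_⟩
      rcases hor with ⟨hx, hy⟩ | ⟨hx, hy⟩
      · subst hx; subst hy
        have hTP : (Walk.cons hzc T') = P h :=
          my_path_eq_of_edges_subset _ _ hTpath (hPath a b h).1 hall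
        intro e
        rw [hTP]
      · subst hx; subst hy
        have hrevpath : (P h).reverse.IsPath := (hPath a b h).1.reverse
        have hsub : ∀ e ∈ (Walk.cons hzc T').edges, e ∈ (P h).reverse.edges := by
          intro e he
          rw [Walk.edges_reverse, List.mem_reverse]
          exact hall e he
        have hTP : (Walk.cons hzc T') = (P h).reverse :=
          my_path_eq_of_edges_subset _ _ hTpath hrevpath hsub
        intro e
        rw [hTP, Walk.edges_reverse, List.mem_reverse]
  obtain ⟨a₁, b₁, h₁, hor₁, hiff₁⟩ := key T₁ hT₁
  obtain ⟨a₂, b₂, h₂, hor₂, hiff₂⟩ := key T₂ hT₂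
  have hss : s(a₁, b₁) = s(a₂, b₂) := by
    rcases hor₁ with ⟨hx1, hy1⟩ | ⟨hx1, hy1⟩ <;> rcases hor₂ with ⟨hx2, hy2⟩ | ⟨hx2, hy2⟩
    · rw [f.injective (hx1.symm.trans hx2), f.injective (hy1.symm.trans hy2)]
    · rw [f.injective (hx1.symm.trans hx2), f.injective (hy1.symm.trans hy2)]
      exact Sym2.eq_swap
    · rw [f.injective (hx1.symm.trans hx2), f.injective (hy1.symm.trans hy2)]
      exact Sym2.eq_swap
    · rw [f.injective (hx1.symm.trans hx2), f.injective (hy1.symm.trans hy2)]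
  apply hnee
  ext e
  simp only [Set.mem_setOf_eq]
  rw [hiff₁ e, hiff₂ e]
  constructor
  · exact hsame h₂ h₁ hss.symm e
  · exact hsame h₁ h₂ hss e
end
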